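/- arXiv:1808.10130 — 4 statements merged into one kernel-verified Lean document; each statement's English description precedes it below -/
import Mathlib

section
/- Let v₁,…,v_d be vectors in an inner product space with ‖v_j‖ ≤ C for all j, and suppose Σ_{1≤j<l≤d} ‖v_j − v_l‖² ≤ ε. Then for any indices j,l,k,m, |⟨v_j, v_l⟩ − ⟨v_k, v_m⟩| ≤ 2C·√ε. -/
/-! Every term of the sum is at most `ε`, so all pairwise distances are at most `√ε`. Splitting
`⟪v j, v l⟫ - ⟪v k, v m⟫ = ⟪v j - v k, v l⟫ + ⟪v k, v l - v m⟫` and applying Cauchy–Schwarz to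
each summand gives the bound `2 C √ε`. -/

open Finset RealInnerProductSpace

lemma norm_sub_le_sqrt_of_sum_sq_le {ι E : Type*} [Fintype ι] [LinearOrder ι]
    [SeminormedAddCommGroup E] (v : ι → E) {ε : ℝ}
    (h : ∑ j, ∑ l, (if j < l then ‖v j - v l‖ ^ 2 else 0) ≤ ε) (a b : ι) :
    ‖v a - v b‖ ≤ √ε := by
  wlog hab : a ≤ b generalizing a b
  · rw [norm_sub_rev]
    exact this b a (le_of_not_ge hab)
  rcases hab.lt_or_eq with hlt | rfl
  · refine Real.le_sqrt_of_sq_le ?_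
    calc ‖v a - v b‖ ^ 2 = if a < b then ‖v a - v b‖ ^ 2 else 0 := (if_pos hlt).symm
      _ ≤ ∑ l, (if a < l then ‖v a - v l‖ ^ 2 else 0) :=
          single_le_sum (f := fun l => if a < l then ‖v a - v l‖ ^ 2 else 0)
            (fun l _ => by positivity) (mem_univ b)
      _ ≤ ∑ j, ∑ l, (if j < l then ‖v j - v l‖ ^ 2 else 0) :=
          single_le_sum (f := fun j => ∑ l, if j < l then ‖v j - v l‖ ^ 2 else 0)
            (fun j _ => sum_nonneg fun l _ => by positivity) (mem_univ a)
      _ ≤ ε := h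
  · simp

lemma abs_inner_sub_inner_le {E : Type*} [SeminormedAddCommGroup E] [InnerProductSpace ℝ E]
    (x y x' y' : E) : |⟪x, y⟫ - ⟪x', y'⟫| ≤ ‖x - x'‖ * ‖y‖ + ‖x'‖ * ‖y - y'‖ := by
  have hsplit : ⟪x, y⟫ - ⟪x', y'⟫ = ⟪x - x', y⟫ + ⟪x', y - y'⟫ := by
    rw [inner_sub_left, inner_sub_right]; ring
  rw [hsplit]
  exact (abs_add_le _ _).trans
    (add_le_add (abs_real_inner_le_norm _ _) (abs_real_inner_le_norm _ _))

theorem stmt2_general {E : Type*} [NormedAddCommGroup E] [InnerProductSpace ℝ E]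
    (d : ℕ) (v : Fin d → E) (C ε : ℝ)
    (hv : ∀ j, ‖v j‖ ≤ C)
    (hsum : ∑ j : Fin d, ∑ l : Fin d, (if j < l then ‖v j - v l‖ ^ 2 else 0) ≤ ε) :
    ∀ j l k m : Fin d,
      |(inner ℝ (v j) (v l) : ℝ) - (inner ℝ (v k) (v m) : ℝ)| ≤ 2 * C * Real.sqrt ε := by
  intro j l k m
  have hdist := norm_sub_le_sqrt_of_sum_sq_le v hsum
  have hC : 0 ≤ C := (norm_nonneg _).trans (hv j)
  calc |(inner ℝ (v j) (v l) : ℝ) - inner ℝ (v k) (v m)|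
      ≤ ‖v j - v k‖ * ‖v l‖ + ‖v k‖ * ‖v l - v m‖ := abs_inner_sub_inner_le _ _ _ _
    _ ≤ √ε * C + C * √ε := by gcongr <;> first | exact hv _ | exact hdist _ _
    _ = 2 * C * √ε := by ring

theorem stmt2 {E : Type*} [NormedAddCommGroup E] [InnerProductSpace ℝ E]
    (d : ℕ) (v : Fin d → E) (C ε : ℝ) (hC : 0 < C) (hε : 0 ≤ ε)
    (hv : ∀ j, ‖v j‖ ≤ C)
    (hsum : ∑ j : Fin d, ∑ l : Fin d, (if j < l then ‖v j - v l‖ ^ 2 else 0) ≤ ε) :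
    ∀ j l k m : Fin d,
      |(inner ℝ (v j) (v l) : ℝ) - (inner ℝ (v k) (v m) : ℝ)| ≤ 2 * C * Real.sqrt ε :=
  stmt2_general d v C ε hv hsum
end

section
/- Let (X, dist) be a metric space, δ ≥ 1, M ≥ 1, and let F : X → Finset-of-d-tuples be a map assigning to each x a d-tuple (x₁,…,x_d) such that for all x, y one can order the tuples so that dist(x_j, y_j) ≤ M·dist(x,y)^{1/δ}. Define φ_{n+1}(x) = (1/d)Σ_j φ_n(x_j) starting from a 1-Lipschitz function φ₀. Then φ_n is (Mⁿ, δ^{−n})-Hölder continuous: |φ_n(x) − φ_n(y)| ≤ Mⁿ·dist(x,y)^{1/δⁿ} for all x, y ∈ X with dist(x,y) ≤ 1. -/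
private lemma key_max (δ M : ℝ) (hδ : 1 ≤ δ) (hM : 1 ≤ M) (n : ℕ)
    (s t : ℝ) (hs : 0 ≤ s) (ht : 0 ≤ t)
    (h : s ≤ M * t ^ (1 / δ)) :
    max s (s ^ (1 / δ ^ n)) ≤ M * max t (t ^ (1 / δ ^ (n + 1))) := by
  have hδ0 : (0:ℝ) < δ := lt_of_lt_of_le one_pos hδ
  have hδn : (1:ℝ) ≤ δ ^ n := one_le_pow₀ hδ
  have hδn1 : (1:ℝ) ≤ δ ^ (n+1) := one_le_pow₀ hδ
  have hδn0 : (0:ℝ) < δ ^ n := lt_of_lt_of_le one_pos hδn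
  have hδn10 : (0:ℝ) < δ ^ (n+1) := lt_of_lt_of_le one_pos hδn1
  have hexp : (0:ℝ) < 1 / δ ^ n := by positivity
  have hexp1 : (0:ℝ) < 1 / δ ^ (n+1) := by positivity
  have hM0 : (0:ℝ) ≤ M := le_trans zero_le_one hM
  rcases eq_or_lt_of_le ht with ht0 | ht0
  · -- t = 0
    have ht0' : t = 0 := ht0.symm
    have hs0 : s = 0 := by
      have : M * t ^ (1/δ) = 0 := by
        rw [ht0', Real.zero_rpow (by positivity : (1:ℝ)/δ ≠ 0), mul_zero]
      exact le_antisymm (this ▸ h) hs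
    rw [hs0, ht0', Real.zero_rpow (ne_of_gt hexp), Real.zero_rpow (ne_of_gt hexp1)]
    simp
  · -- t > 0
    have hmaxt : t ^ (1/δ) ≤ max t (t ^ (1 / δ ^ (n+1))) := by
      rcases le_total t 1 with ht1 | ht1
      · refine le_trans ?_ (le_max_right _ _)
        apply Real.rpow_le_rpow_of_exponent_ge ht0 ht1
        rw [div_le_div_iff₀ hδn10 hδ0, one_mul, one_mul, pow_succ]
        exact le_mul_of_one_le_left (le_of_lt hδ0) hδn
      · refine le_trans ?_ (le_max_left _ _)
        nth_rewrite 2 [← Real.rpow_one t]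
        apply Real.rpow_le_rpow_of_exponent_le ht1
        rw [div_le_one hδ0]; exact hδ
    refine max_le ?_ ?_
    · calc s ≤ M * t ^ (1/δ) := h
        _ ≤ M * max t (t ^ (1 / δ ^ (n+1))) := by
            exact mul_le_mul_of_nonneg_left hmaxt hM0
    · have h1 : s ^ (1 / δ ^ n) ≤ (M * t ^ (1/δ)) ^ (1 / δ ^ n) :=
        Real.rpow_le_rpow hs h (le_of_lt hexp)
      have h2 : (M * t ^ (1/δ)) ^ (1 / δ ^ n)
          = M ^ (1 / δ ^ n) * t ^ (1 / δ ^ (n+1)) := by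
        rw [Real.mul_rpow hM0 (Real.rpow_nonneg ht _), ← Real.rpow_mul ht]
        congr 1
        rw [one_div, one_div, one_div, ← mul_inv, ← pow_succ']
      have h3 : M ^ (1 / δ ^ n) ≤ M := by
        nth_rewrite 2 [← Real.rpow_one M]
        apply Real.rpow_le_rpow_of_exponent_le hM
        rw [div_le_one hδn0]; exact hδn
      calc s ^ (1 / δ ^ n) ≤ M ^ (1 / δ ^ n) * t ^ (1 / δ ^ (n+1)) := h1.trans h2.le
        _ ≤ M * t ^ (1 / δ ^ (n+1)) :=
            mul_le_mul_of_nonneg_right h3 (Real.rpow_nonneg ht _)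
        _ ≤ M * max t (t ^ (1 / δ ^ (n+1))) :=
            mul_le_mul_of_nonneg_left (le_max_right _ _) hM0

theorem stmt11 {X : Type*} [MetricSpace X] (d : ℕ) (hd : 0 < d)
    (δ M : ℝ) (hδ : 1 ≤ δ) (hM : 1 ≤ M)
    (F : X → Fin d → X)
    (hF : ∀ x y : X, ∃ σ : Equiv.Perm (Fin d),
      ∀ j, dist (F x j) (F y (σ j)) ≤ M * dist x y ^ (1 / δ))
    (φ : ℕ → X → ℝ)
    (hφ0 : ∀ x y, |φ 0 x - φ 0 y| ≤ dist x y)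
    (hrec : ∀ n x, φ (n + 1) x = (1 / (d : ℝ)) * ∑ j, φ n (F x j)) :
    ∀ n x y, dist x y ≤ 1 →
      |φ n x - φ n y| ≤ M ^ n * dist x y ^ (1 / δ ^ n) := by
  have hM0 : (0:ℝ) ≤ M := le_trans zero_le_one hM
  have hd0 : (0:ℝ) < d := Nat.cast_pos.mpr hd
  -- strengthened claim without dist ≤ 1
  have main : ∀ n x y, |φ n x - φ n y| ≤
      M ^ n * max (dist x y) (dist x y ^ (1 / δ ^ n)) := by
    intro n
    induction n with
    | zero =>
      intro x y
      simp only [pow_zero, one_mul, div_one, Real.rpow_one, max_self]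
      exact hφ0 x y
    | succ n ih =>
      intro x y
      obtain ⟨σ, hσ⟩ := hF x y
      have hsum : ∑ j, φ n (F y j) = ∑ j, φ n (F y (σ j)) :=
        (Equiv.sum_comp σ (fun j => φ n (F y j))).symm
      rw [hrec n x, hrec n y, hsum, ← mul_sub, ← Finset.sum_sub_distrib]
      rw [abs_mul, abs_of_pos (by positivity : (0:ℝ) < 1 / (d:ℝ))]
      have hterm : ∀ j : Fin d, |φ n (F x j) - φ n (F y (σ j))| ≤
          M ^ n * (M * max (dist x y) (dist x y ^ (1 / δ ^ (n+1)))) := by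
        intro j
        refine (ih (F x j) (F y (σ j))).trans ?_
        refine mul_le_mul_of_nonneg_left ?_ (by positivity)
        exact key_max δ M hδ hM n _ _ dist_nonneg dist_nonneg (hσ j)
      calc (1 / (d:ℝ)) * |∑ j, (φ n (F x j) - φ n (F y (σ j)))|
          ≤ (1 / (d:ℝ)) * ∑ j, |φ n (F x j) - φ n (F y (σ j))| := by
            refine mul_le_mul_of_nonneg_left ?_ (by positivity)
            exact Finset.abs_sum_le_sum_abs _ _
        _ ≤ (1 / (d:ℝ)) * ∑ _j : Fin d,
              (M ^ n * (M * max (dist x y) (dist x y ^ (1 / δ ^ (n+1))))) := by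
            refine mul_le_mul_of_nonneg_left ?_ (by positivity)
            exact Finset.sum_le_sum fun j _ => hterm j
        _ = M ^ (n+1) * max (dist x y) (dist x y ^ (1 / δ ^ (n+1))) := by
            rw [Finset.sum_const, Finset.card_univ, Fintype.card_fin, nsmul_eq_mul]
            field_simp
            ring
  intro n x y hxy
  refine (main n x y).trans ?_
  refine mul_le_mul_of_nonneg_left ?_ (by positivity)
  have hδn : (1:ℝ) ≤ δ ^ n := one_le_pow₀ hδ
  have hδn0 : (0:ℝ) < δ ^ n := lt_of_lt_of_le one_pos hδn
  rcases eq_or_lt_of_le (dist_nonneg : (0:ℝ) ≤ dist x y) with h0 | h0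
  · rw [← h0, Real.zero_rpow (by positivity : (1:ℝ)/δ^n ≠ 0)]; simp
  · have : dist x y ≤ dist x y ^ (1 / δ ^ n) := by
      nth_rewrite 1 [← Real.rpow_one (dist x y)]
      apply Real.rpow_le_rpow_of_exponent_ge h0 hxy
      rw [div_le_one hδn0]; exact hδn
    exact max_le this le_rfl
end

section
/- Let g : 𝔻 → ℂ be a holomorphic map on the unit disc of the form g(z) = z^m·u(z) with u holomorphic, u(0) ≠ 0, and 1 ≤ m ≤ δ. Then there exist a constant M ≥ 1 and a radius r > 0 such that for all w₁, w₂ in the disc of radius r around 0, the m preimage multisets g⁻¹(w₁) ∩ 𝔻(0,r') and g⁻¹(w₂) ∩ 𝔻(0,r') (for suitable r') can be matched into pairs (x_j, y_j) with |x_j − y_j| ≤ M·|w₁ − w₂|^{1/m} ≤ M·|w₁ − w₂|^{1/δ}. -/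
/-!
Since `u 0 ≠ 0`, `u` has an analytic `m`-th root `v` near `0`, and `f z = z * v z` is a local
biholomorphism with `g = f ^ m`. In the coordinate `t = f z` the preimages of `w` are the `m`
points `ζ ^ j * t` with `t ^ m = w` and `ζ` a primitive `m`-th root of unity. For two values
`w₁, w₂`, the factorisation `t₁ ^ m - w₂ = ∏ (t₁ - ζ ^ j * s)` yields an `m`-th root `t₂` of `w₂`
with `‖t₁ - t₂‖ ≤ ‖w₁ - w₂‖ ^ (1 / m)`; pulling the two families back by the Lipschitz local
inverse of `f` gives the matching.
-/

open Set Metric Filter Topology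
open scoped NNReal

theorem IsPrimitiveRoot.pow_eq_pow_iff_exists_pow_mul {R : Type*} [CommRing R] [IsDomain R]
    {m : ℕ} (hm : m ≠ 0) {ζ : R} (hζ : IsPrimitiveRoot ζ m) {s t : R} :
    s ^ m = t ^ m ↔ ∃ j : Fin m, ζ ^ (j : ℕ) * t = s := by
  rw [← Polynomial.mem_nthRoots (Nat.pos_of_ne_zero hm), hζ.nthRoots_eq rfl]
  simp [Fin.exists_iff]

theorem IsPrimitiveRoot.norm_pow_mul {m : ℕ} (hm : m ≠ 0) {ζ : ℂ} (hζ : IsPrimitiveRoot ζ m)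
    (j : ℕ) (t : ℂ) : ‖ζ ^ j * t‖ = ‖t‖ := by
  rw [norm_mul, norm_pow, hζ.norm'_eq_one hm, one_pow, one_mul]

theorem Complex.exists_pow_eq_norm_sub_le {m : ℕ} (hm : m ≠ 0) (t w : ℂ) :
    ∃ s : ℂ, s ^ m = w ∧ ‖t - s‖ ≤ ‖t ^ m - w‖ ^ (m : ℝ)⁻¹ := by
  have hζ := Complex.isPrimitiveRoot_exp m hm
  have hm' := Nat.pos_of_ne_zero hm
  obtain ⟨s₀, rfl⟩ := IsAlgClosed.exists_pow_nat_eq w hm'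
  -- the closest of the `m` roots `μ * s₀` is at most the geometric mean of the distances
  obtain ⟨μ, hμ, hmin⟩ := (Polynomial.nthRootsFinset m (1 : ℂ)).exists_min_image
    (fun μ => ‖t - μ * s₀‖) ⟨1, (Polynomial.mem_nthRootsFinset hm' 1).2 (one_pow m)⟩
  refine ⟨μ * s₀, by rw [mul_pow, (Polynomial.mem_nthRootsFinset hm' 1).1 hμ, one_mul], ?_⟩
  have hpow : ‖t - μ * s₀‖ ^ m ≤ ‖t ^ m - s₀ ^ m‖ := by
    calc ‖t - μ * s₀‖ ^ m = ∏ _ν ∈ Polynomial.nthRootsFinset m (1 : ℂ), ‖t - μ * s₀‖ := by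
          rw [Finset.prod_const, hζ.card_nthRootsFinset]
      _ ≤ ∏ ν ∈ Polynomial.nthRootsFinset m (1 : ℂ), ‖t - ν * s₀‖ :=
          Finset.prod_le_prod (fun _ _ => norm_nonneg _) hmin
      _ = ‖t ^ m - s₀ ^ m‖ := by rw [← norm_prod, hζ.pow_sub_pow_eq_prod_sub_mul t s₀ hm']
  calc ‖t - μ * s₀‖ = (‖t - μ * s₀‖ ^ m) ^ (m : ℝ)⁻¹ :=
        (Real.pow_rpow_inv_natCast (norm_nonneg _) hm).symm
    _ ≤ _ := by gcongr

theorem AnalyticAt.exists_pow_eq {E : Type*} [NormedAddCommGroup E] [NormedSpace ℂ E]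
    {u : E → ℂ} {a : E} (hu : AnalyticAt ℂ u a) (ha : u a ≠ 0) {m : ℕ} (hm : m ≠ 0) :
    ∃ v : E → ℂ, AnalyticAt ℂ v a ∧ v a ≠ 0 ∧ ∀ z, v z ^ m = u z := by
  obtain ⟨c, hc⟩ := IsAlgClosed.exists_pow_nat_eq (u a) (Nat.pos_of_ne_zero hm)
  -- the principal branch is analytic at `u a / u a = 1`
  refine ⟨fun z => c * (u z / u a) ^ (m⁻¹ : ℂ), ?_, ?_, fun z => ?_⟩
  · refine analyticAt_const.mul ((hu.div analyticAt_const ha).cpow analyticAt_const ?_)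
    simp [div_self ha, Complex.one_mem_slitPlane]
  · have hc0 : c ≠ 0 := by rintro rfl; exact ha (by simp [← hc, hm])
    simpa [div_self ha] using hc0
  · rw [mul_pow, Complex.cpow_nat_inv_pow _ hm, hc, mul_div_cancel₀ _ ha]

theorem HasStrictFDerivAt.exists_ball_localInverse {𝕜 : Type*} [NontriviallyNormedField 𝕜]
    {E F : Type*} [NormedAddCommGroup E] [NormedSpace 𝕜 E] [CompleteSpace E]
    [NormedAddCommGroup F] [NormedSpace 𝕜 F] {f : E → F} {f' : E ≃L[𝕜] F} {a : E}
    (hf : HasStrictFDerivAt f (f' : E →L[𝕜] F) a) {s : Set E} (hs : s ∈ 𝓝 a) :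
    ∃ ψ : F → E, ∃ L : ℝ≥0, ∃ r > 0, ∃ ε > 0, ball a r ⊆ s ∧ LeftInvOn ψ f (ball a r) ∧
      RightInvOn ψ f (ball (f a) ε) ∧ MapsTo ψ (ball (f a) ε) (ball a r) ∧
      LipschitzOnWith L ψ (ball (f a) ε) := by
  set ψ := hf.localInverse f f' a
  obtain ⟨L, t, ht, hlip⟩ := hf.to_localInverse.exists_lipschitzOnWith
  obtain ⟨ε₁, hε₁, hball₁⟩ := Metric.mem_nhds_iff.1 (inter_mem hf.eventually_right_inverse ht)
  obtain ⟨r, hr, hball⟩ := Metric.mem_nhds_iff.1 (inter_mem hs hf.eventually_left_inverse)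
  have hψ : ψ ⁻¹' ball a r ∈ 𝓝 (f a) :=
    hf.localInverse_continuousAt.preimage_mem_nhds (by simpa [ψ] using ball_mem_nhds a hr)
  obtain ⟨ε, hε, hballε⟩ := Metric.mem_nhds_iff.1 (inter_mem (ball_mem_nhds _ hε₁) hψ)
  refine ⟨ψ, L, r, hr, ε, hε, fun z hz => (hball hz).1, fun z hz => (hball hz).2,
    fun y hy => (hball₁ (hballε hy).1).1, fun y hy => (hballε hy).2,
    hlip.mono fun y hy => (hball₁ (hballε hy).1).2⟩

section PowChart

variable {m : ℕ} {g f ψ : ℂ → ℂ} {r ε : ℝ}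

theorem range_localInverse_pow_mul_eq (hm : m ≠ 0) {ζ : ℂ} (hζ : IsPrimitiveRoot ζ m)
    (hleft : LeftInvOn ψ f (ball 0 r)) (hright : RightInvOn ψ f (ball 0 ε))
    (hψ : MapsTo ψ (ball 0 ε) (ball 0 r)) (hg : EqOn g (fun z => f z ^ m) (ball 0 r))
    {t : ℂ} (ht : ‖t‖ < ε) :
    range (fun j : Fin m => ψ (ζ ^ (j : ℕ) * t)) = ball 0 r ∩ g ⁻¹' {t ^ m} := by
  ext z
  constructor
  · rintro ⟨j, rfl⟩
    have hj : ζ ^ (j : ℕ) * t ∈ ball 0 ε := by rwa [mem_ball_zero_iff, hζ.norm_pow_mul hm]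
    refine ⟨hψ hj, ?_⟩
    change g _ = t ^ m
    simp only [hg (hψ hj), hright hj]
    exact (hζ.pow_eq_pow_iff_exists_pow_mul hm).2 ⟨j, rfl⟩
  · rintro ⟨hz, hgz⟩
    change g z = t ^ m at hgz
    rw [hg hz, hζ.pow_eq_pow_iff_exists_pow_mul hm] at hgz
    obtain ⟨j, hj⟩ := hgz
    exact ⟨j, by simp only [hj, hleft hz]⟩

theorem exists_preimage_matching_of_eqOn_pow (hm : m ≠ 0) (hε : 0 ≤ ε) {L : ℝ≥0}
    (hleft : LeftInvOn ψ f (ball 0 r)) (hright : RightInvOn ψ f (ball 0 ε))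
    (hψ : MapsTo ψ (ball 0 ε) (ball 0 r)) (hlip : LipschitzOnWith L ψ (ball 0 ε))
    (hg : EqOn g (fun z => f z ^ m) (ball 0 r)) {w₁ w₂ : ℂ} (hw₁ : ‖w₁‖ < ε ^ m)
    (hw₂ : ‖w₂‖ < ε ^ m) :
    ∃ x y : Fin m → ℂ, range x = ball 0 r ∩ g ⁻¹' {w₁} ∧ range y = ball 0 r ∩ g ⁻¹' {w₂} ∧
      ∀ j, ‖x j - y j‖ ≤ L * ‖w₁ - w₂‖ ^ (m : ℝ)⁻¹ := by
  obtain ⟨ζ, hζ⟩ : ∃ ζ : ℂ, IsPrimitiveRoot ζ m := ⟨_, Complex.isPrimitiveRoot_exp m hm⟩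
  obtain ⟨t₁, rfl⟩ := IsAlgClosed.exists_pow_nat_eq w₁ (Nat.pos_of_ne_zero hm)
  obtain ⟨t₂, rfl, ht⟩ := Complex.exists_pow_eq_norm_sub_le hm t₁ w₂
  have hroot {t : ℂ} (h : ‖t ^ m‖ < ε ^ m) : ‖t‖ < ε := by
    rw [norm_pow] at h
    exact lt_of_pow_lt_pow_left₀ m hε h
  refine ⟨_, _, range_localInverse_pow_mul_eq hm hζ hleft hright hψ hg (hroot hw₁),
    range_localInverse_pow_mul_eq hm hζ hleft hright hψ hg (hroot hw₂), fun j => ?_⟩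
  have hmem {t : ℂ} (h : ‖t ^ m‖ < ε ^ m) : ζ ^ (j : ℕ) * t ∈ ball 0 ε := by
    rw [mem_ball_zero_iff, hζ.norm_pow_mul hm]
    exact hroot h
  calc ‖ψ (ζ ^ (j : ℕ) * t₁) - ψ (ζ ^ (j : ℕ) * t₂)‖
      ≤ L * ‖ζ ^ (j : ℕ) * t₁ - ζ ^ (j : ℕ) * t₂‖ := hlip.norm_sub_le (hmem hw₁) (hmem hw₂)
    _ = L * ‖t₁ - t₂‖ := by rw [← mul_sub, hζ.norm_pow_mul hm]
    _ ≤ L * ‖t₁ ^ m - t₂ ^ m‖ ^ (m : ℝ)⁻¹ := by gcongr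

end PowChart

theorem stmt16 (m : ℕ) (δ : ℝ) (hm : 1 ≤ m) (hδ : (m : ℝ) ≤ δ)
    (g u : ℂ → ℂ) (hu : DifferentiableOn ℂ u (Metric.ball 0 1))
    (hu0 : u 0 ≠ 0)
    (hg : ∀ z ∈ Metric.ball (0 : ℂ) 1, g z = z ^ m * u z) :
    ∃ M ≥ (1 : ℝ), ∃ r > (0 : ℝ), ∃ r' > (0 : ℝ),
      ∀ w₁ ∈ Metric.ball (0 : ℂ) r, ∀ w₂ ∈ Metric.ball (0 : ℂ) r,
        ∃ x y : Fin m → ℂ,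
          (∀ j, x j ∈ Metric.ball (0 : ℂ) r' ∧ g (x j) = w₁) ∧
          (∀ j, y j ∈ Metric.ball (0 : ℂ) r' ∧ g (y j) = w₂) ∧
          (∀ z ∈ Metric.ball (0 : ℂ) r', g z = w₁ → ∃ j, x j = z) ∧
          (∀ z ∈ Metric.ball (0 : ℂ) r', g z = w₂ → ∃ j, y j = z) ∧
          ∀ j, ‖x j - y j‖ ≤ M * ‖w₁ - w₂‖ ^ (1 / δ) := by
  have hm0 : m ≠ 0 := by omega
  obtain ⟨v, hv, hv0, hvu⟩ :=
    (hu.analyticAt (ball_mem_nhds 0 one_pos)).exists_pow_eq hu0 hm0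
  have hf : HasStrictDerivAt (fun z => z * v z) (v 0) 0 := by
    simpa [Pi.mul_def] using (hasStrictDerivAt_id 0).mul hv.hasStrictDerivAt
  obtain ⟨ψ, L, r', hr', ε, hε, hsub, hleft, hright, hψ, hlip⟩ :=
    (hf.hasStrictFDerivAt_equiv hv0).exists_ball_localInverse (ball_mem_nhds 0 one_pos)
  simp only [zero_mul] at hright hψ hlip
  have hgf : EqOn g (fun z => (z * v z) ^ m) (ball 0 r') := fun z hz => by
    change g z = (z * v z) ^ m
    rw [hg z (hsub hz), mul_pow, hvu]
  refine ⟨max L 1, le_max_right _ _, min (ε ^ m) (1 / 2), by positivity, r', hr',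
    fun w₁ hw₁ w₂ hw₂ => ?_⟩
  rw [mem_ball_zero_iff, lt_min_iff] at hw₁ hw₂
  obtain ⟨x, y, hx, hy, hxy⟩ :=
    exists_preimage_matching_of_eqOn_pow hm0 hε.le hleft hright hψ hlip hgf hw₁.1 hw₂.1
  refine ⟨x, y, fun j => hx.subset (mem_range_self j), fun j => hy.subset (mem_range_self j),
    fun z hz hgz => hx.superset ⟨hz, hgz⟩, fun z hz hgz => hy.superset ⟨hz, hgz⟩,
    fun j => (hxy j).trans ?_⟩
  have hdist : ‖w₁ - w₂‖ ≤ 1 := by linarith [norm_sub_le w₁ w₂]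
  have hm_pos : (0 : ℝ) < m := by exact_mod_cast Nat.pos_of_ne_zero hm0
  have hexp : 1 / δ ≤ (m : ℝ)⁻¹ := by rw [one_div]; exact inv_anti₀ hm_pos hδ
  exact mul_le_mul (mod_cast le_max_left _ _)
    (Real.rpow_le_rpow_of_exponent_ge' (norm_nonneg _) hdist
      (one_div_nonneg.2 (hm_pos.le.trans hδ)) hexp)
    (by positivity) (by positivity)
end

section
/- For the map p_m(z) = z^m on ℂ (m ≥ 1): for any w₁, w₂ ∈ ℂ, the multisets of m-th roots of w₁ and of w₂ can be paired as (x_j, y_j), j = 1,…,m, such that |x_j − y_j| ≤ C_m·|w₁ − w₂|^{1/m} for a constant C_m depending only on m. -/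
/-!
Choose `a`, `b` with `a ^ m = w₁`, `b ^ m = w₂`. Since `a ^ m - b ^ m = ∏_{μ ^ m = 1} (a - μ b)` has
`m` factors, one of them satisfies `‖a - μ b‖ ^ m ≤ ‖w₁ - w₂‖`. Pairing the root `ζ ^ j a` of `w₁`
with the root `ζ ^ j μ b` of `w₂`, for a primitive `m`-th root of unity `ζ`, moves every root by
exactly `‖a - μ b‖`, so `C_m = 1` works.
-/

open Finset Polynomial

namespace IsPrimitiveRoot

theorem pow_mul_pow_eq {M : Type*} [CommMonoid M] {ζ : M} {m : ℕ} (hζ : IsPrimitiveRoot ζ m)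
    (j : ℕ) (a : M) : (ζ ^ j * a) ^ m = a ^ m := by
  rw [mul_pow, ← pow_mul, mul_comm j m, pow_mul, hζ.pow_eq_one, one_pow, one_mul]

theorem exists_pow_mul_eq_of_pow_eq {R : Type*} [CommRing R] [IsDomain R] {ζ : R} {m : ℕ}
    (hζ : IsPrimitiveRoot ζ m) (hm : 0 < m) {a z : R} (hz : z ^ m = a ^ m) :
    ∃ j : Fin m, ζ ^ (j : ℕ) * a = z := by
  have hmem : z ∈ nthRoots m (a ^ m) := (mem_nthRoots hm).2 hz
  rw [hζ.nthRoots_eq rfl, Multiset.mem_map] at hmem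
  obtain ⟨j, hj, rfl⟩ := hmem
  exact ⟨⟨j, Multiset.mem_range.1 hj⟩, rfl⟩

theorem exists_norm_sub_mul_le_rpow {K : Type*} [NormedField K] {ζ : K} {m : ℕ}
    (hζ : IsPrimitiveRoot ζ m) (hm : 0 < m) (a b : K) :
    ∃ μ : K, μ ^ m = 1 ∧ ‖a - μ * b‖ ≤ ‖a ^ m - b ^ m‖ ^ (1 / (m : ℝ)) := by
  have hne : (nthRootsFinset m (1 : K)).Nonempty := ⟨1, by simp [Polynomial.mem_nthRootsFinset hm]⟩
  obtain ⟨μ, hμ, hmin⟩ := exists_min_image _ (fun μ => ‖a - μ * b‖) hne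
  refine ⟨μ, (Polynomial.mem_nthRootsFinset hm 1).1 hμ, ?_⟩
  have hpow : ‖a - μ * b‖ ^ m ≤ ‖a ^ m - b ^ m‖ :=
    calc ‖a - μ * b‖ ^ m
        = ∏ _ν ∈ nthRootsFinset m (1 : K), ‖a - μ * b‖ := by
          rw [prod_const, hζ.card_nthRootsFinset]
      _ ≤ ∏ ν ∈ nthRootsFinset m (1 : K), ‖a - ν * b‖ :=
          prod_le_prod (fun _ _ => norm_nonneg _) hmin
      _ = ‖a ^ m - b ^ m‖ := by
          rw [hζ.pow_sub_pow_eq_prod_sub_mul a b hm, norm_prod]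
  rw [one_div, Real.le_rpow_inv_iff_of_pos (norm_nonneg _) (norm_nonneg _) (by positivity)]
  exact_mod_cast hpow

end IsPrimitiveRoot

theorem stmt17 (m : ℕ) (hm : 1 ≤ m) :
    ∃ C > (0 : ℝ), ∀ w₁ w₂ : ℂ, ∃ x y : Fin m → ℂ,
      (∀ j, x j ^ m = w₁) ∧ (∀ j, y j ^ m = w₂) ∧
      (∀ z : ℂ, z ^ m = w₁ → ∃ j, x j = z) ∧
      (∀ z : ℂ, z ^ m = w₂ → ∃ j, y j = z) ∧
      ∀ j, ‖x j - y j‖ ≤ C * ‖w₁ - w₂‖ ^ (1 / (m : ℝ)) := by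
  have hm0 : m ≠ 0 := by omega
  have hζ := Complex.isPrimitiveRoot_exp m hm0
  refine ⟨1, one_pos, fun w₁ w₂ => ?_⟩
  obtain ⟨a, rfl⟩ := IsAlgClosed.exists_pow_nat_eq w₁ hm
  obtain ⟨b, rfl⟩ := IsAlgClosed.exists_pow_nat_eq w₂ hm
  obtain ⟨μ, hμ, hclose⟩ := hζ.exists_norm_sub_mul_le_rpow hm a b
  have hμb : (μ * b) ^ m = b ^ m := by rw [mul_pow, hμ, one_mul]
  refine ⟨fun j => _ ^ (j : ℕ) * a, fun j => _ ^ (j : ℕ) * (μ * b),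
    fun j => hζ.pow_mul_pow_eq j a, fun j => (hζ.pow_mul_pow_eq j _).trans hμb,
    fun z hz => hζ.exists_pow_mul_eq_of_pow_eq hm hz,
    fun z hz => hζ.exists_pow_mul_eq_of_pow_eq hm (hz.trans hμb.symm), fun j => ?_⟩
  rw [← mul_sub, norm_mul, norm_pow, hζ.norm'_eq_one hm0, one_pow, one_mul, one_mul]
  exact hclose
end
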